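/- arXiv:2411.16494 — 4 statements merged into one kernel-verified Lean document; each statement's English description precedes it below -/
import Mathlib

section
/- Let θ ∈ (-π/2,π/2), m ≥ 0. For every ψ ∈ C_c^∞(ℝ;ℂ⁴), applying the differential expression of H_θ twice yields the supersymmetric identity H_θ(H_θψ) = (S_θ + m²)ψ + iα₁α₂ψ, where S_θ acts componentwise on ψ and the matrix iα₁α₂ equals diag(-1, 1, -1, 1). -/
noncomputable section

open MeasureTheory Filter Complex
open scoped InnerProductSpace

/-- The state space `ℂ⁴`. -/
abbrev E4 : Type := EuclideanSpace ℂ (Fin 4)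

/-- The Hilbert space `L²(ℝ; ℂ⁴)`. -/
abbrev HS := Lp E4 2 (volume : Measure ℝ)

/-- Action of a `4 × 4` complex matrix on `ℂ⁴`. -/
def mvec (M : Matrix (Fin 4) (Fin 4) ℂ) (v : E4) : E4 :=
  (WithLp.equiv 2 (Fin 4 → ℂ)).symm (M.mulVec ((WithLp.equiv 2 (Fin 4 → ℂ)) v))

/-- The Dirac matrix `α₁ = [[0, σ₁], [σ₁, 0]]`. -/
def alpha1 : Matrix (Fin 4) (Fin 4) ℂ :=
  !![0, 0, 0, 1; 0, 0, 1, 0; 0, 1, 0, 0; 1, 0, 0, 0]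

/-- The Dirac matrix `α₂ = [[0, σ₂], [σ₂, 0]]`. -/
def alpha2 : Matrix (Fin 4) (Fin 4) ℂ :=
  !![0, 0, 0, -Complex.I; 0, 0, Complex.I, 0; 0, -Complex.I, 0, 0; Complex.I, 0, 0, 0]

/-- The Dirac matrix `α₃ = [[0, σ₃], [σ₃, 0]]`. -/
def alpha3 : Matrix (Fin 4) (Fin 4) ℂ :=
  !![0, 0, 1, 0; 0, 0, 0, -1; 1, 0, 0, 0; 0, -1, 0, 0]

/-- The Dirac matrix `α₀ = [[I₂, 0], [0, -I₂]]`. -/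
def alpha0 : Matrix (Fin 4) (Fin 4) ℂ :=
  !![1, 0, 0, 0; 0, 1, 0, 0; 0, 0, -1, 0; 0, 0, 0, -1]

/-- `g` is the distributional (weak) derivative of `f`. -/
def IsWeakDeriv {E : Type*} [NormedAddCommGroup E] [NormedSpace ℂ E]
    (f g : ℝ → E) : Prop :=
  ∀ φ : ℝ → ℂ, ContDiff ℝ (⊤ : ℕ∞) φ → HasCompactSupport φ →
    ∫ x : ℝ, deriv φ x • f x = - ∫ x : ℝ, φ x • g x

/-- Membership in `𝒟 = H¹(ℝ) ∩ L²(ℝ, x² dx)`. -/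
def MemFormDom {E : Type*} [NormedAddCommGroup E] [NormedSpace ℂ E]
    (f : ℝ → E) : Prop :=
  MemLp f 2 volume ∧ (∃ g, MemLp g 2 volume ∧ IsWeakDeriv f g) ∧
    MemLp (fun x : ℝ => (x : ℂ) • f x) 2 volume

/-- Membership in `D(S_θ) = H²(ℝ) ∩ L²(ℝ, x⁴ dx)`. -/
def MemSDom {E : Type*} [NormedAddCommGroup E] [NormedSpace ℂ E]
    (f : ℝ → E) : Prop :=
  MemLp f 2 volume ∧
    (∃ g h, IsWeakDeriv f g ∧ MemLp g 2 volume ∧ IsWeakDeriv g h ∧ MemLp h 2 volume) ∧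
    MemLp (fun x : ℝ => ((x : ℂ) ^ 2) • f x) 2 volume

/-- The graph of the rotated relativistic harmonic oscillator `H_θ` with mass `m`:
`InGraphH θ m ψ χ` holds iff `ψ ∈ D(H_θ) = 𝒟⁴` and
`χ = -i e^{-iθ/2} α₁ ψ' - e^{iθ/2} α₂ (xψ) + m α₃ ψ`. -/
def InGraphH (θ m : ℝ) (ψ χ : HS) : Prop :=
  MemFormDom (ψ : ℝ → E4) ∧
  ∃ g : ℝ → E4, IsWeakDeriv (ψ : ℝ → E4) g ∧
    (χ : ℝ → E4) =ᵐ[volume] fun x : ℝ =>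
      (-Complex.I * Complex.exp (-(θ / 2 : ℝ) * Complex.I)) • mvec alpha1 (g x)
        - Complex.exp ((θ / 2 : ℝ) * Complex.I) • mvec alpha2 ((x : ℂ) • ψ x)
        + (m : ℂ) • mvec alpha3 (ψ x)

/-- `R` is the (bounded, everywhere defined) inverse of `T - z`, where `T` is the operator
whose graph is the relation `Graph`. -/
def IsResolventOf (Graph : HS → HS → Prop) (z : ℂ) (R : HS →L[ℂ] HS) : Prop :=
  (∀ χ : HS, Graph (R χ) (χ + z • R χ)) ∧
  (∀ ψ χ : HS, Graph ψ χ → R (χ - z • ψ) = ψ)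

/-- `z` belongs to the resolvent set `ρ(H_θ)`. -/
def InResolventSetH (θ m : ℝ) (z : ℂ) : Prop :=
  ∃ R : HS →L[ℂ] HS, IsResolventOf (InGraphH θ m) z R

/-- `z` belongs to the `ε`-pseudospectrum `σ_ε(H_θ)` (with the convention `σ₀ = σ`). -/
def InPseudospectrumH (θ m ε : ℝ) (z : ℂ) : Prop :=
  ¬ InResolventSetH θ m z ∨
    (0 < ε ∧ ∃ R : HS →L[ℂ] HS, IsResolventOf (InGraphH θ m) z R ∧ 1 / ε < ‖R‖)


/-- Pointwise action of the differential expression of `H_θ`: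
`H_θψ = -i e^{-iθ/2} α₁ ψ' - e^{iθ/2} α₂ (xψ) + m α₃ ψ`. -/
def Hpt (θ m : ℝ) (ψ : ℝ → E4) : ℝ → E4 := fun x : ℝ =>
  (-Complex.I * Complex.exp (-(θ / 2 : ℝ) * Complex.I)) • mvec alpha1 (deriv ψ x)
    - Complex.exp ((θ / 2 : ℝ) * Complex.I) • mvec alpha2 ((x : ℂ) • ψ x)
    + (m : ℂ) • mvec alpha3 (ψ x)

/-- Pointwise (componentwise) action of the rotated harmonic oscillator
`S_θφ = -e^{-iθ} φ'' + e^{iθ} x² φ`. -/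
def Spt (θ : ℝ) (ψ : ℝ → E4) : ℝ → E4 := fun x : ℝ =>
  (-Complex.exp (-(θ : ℝ) * Complex.I)) • deriv (deriv ψ) x
    + (Complex.exp ((θ : ℝ) * Complex.I) * (x : ℂ) ^ 2) • ψ x


/-! In `H_θ²` the squares `α_k² = 1` produce `-e^{-iθ}ψ'' + e^{iθ}x²ψ + m²ψ`, and the
anticommutation of distinct `α_j` cancels every mixed term except one: differentiating `xψ`
produces an extra `ψ` (the commutator `[d/dx, x] = 1`), which leaves
`(-i e^{-iθ/2}) (-e^{iθ/2}) α₁α₂ ψ = iα₁α₂ψ`. -/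

section DiracMatrices

open Matrix

lemma alpha1_mul_self : alpha1 * alpha1 = 1 := by
  ext i j; fin_cases i <;> fin_cases j <;> simp [alpha1]

lemma alpha2_mul_self : alpha2 * alpha2 = 1 := by
  ext i j; fin_cases i <;> fin_cases j <;> simp [alpha2]

lemma alpha3_mul_self : alpha3 * alpha3 = 1 := by
  ext i j; fin_cases i <;> fin_cases j <;> simp [alpha3]

lemma alpha2_mul_alpha1 : alpha2 * alpha1 = -(alpha1 * alpha2) := by
  ext i j; fin_cases i <;> fin_cases j <;> simp [alpha1, alpha2]

lemma alpha3_mul_alpha1 : alpha3 * alpha1 = -(alpha1 * alpha3) := by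
  ext i j; fin_cases i <;> fin_cases j <;> simp [alpha1, alpha3]

lemma alpha3_mul_alpha2 : alpha3 * alpha2 = -(alpha2 * alpha3) := by
  ext i j; fin_cases i <;> fin_cases j <;> simp [alpha2, alpha3]

lemma I_smul_alpha1_mul_alpha2 : I • (alpha1 * alpha2) = diagonal ![-1, 1, -1, 1] := by
  ext i j; fin_cases i <;> fin_cases j <;> simp [alpha1, alpha2]

end DiracMatrices

lemma mvec_eq_toEuclideanCLM (M : Matrix (Fin 4) (Fin 4) ℂ) :
    mvec M = Matrix.toEuclideanCLM (𝕜 := ℂ) M := rfl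

lemma HasDerivAt.mvec {f : ℝ → E4} {f' : E4} {x : ℝ} (M : Matrix (Fin 4) (Fin 4) ℂ)
    (hf : HasDerivAt f f' x) : HasDerivAt (fun t => mvec M (f t)) (mvec M f') x :=
  ((Matrix.toEuclideanCLM (𝕜 := ℂ) M).restrictScalars ℝ).hasFDerivAt.comp_hasDerivAt x hf

lemma hasDerivAt_Hpt {θ m : ℝ} {ψ : ℝ → E4} (hψ : ContDiff ℝ 2 ψ) (x : ℝ) :
    HasDerivAt (Hpt θ m ψ)
      ((-I * cexp (-(θ / 2 : ℝ) * I)) • mvec alpha1 (deriv (deriv ψ) x)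
        - cexp ((θ / 2 : ℝ) * I) • mvec alpha2 ((x : ℂ) • deriv ψ x + ψ x)
        + (m : ℂ) • mvec alpha3 (deriv ψ x)) x := by
  have hψ' : HasDerivAt ψ (deriv ψ x) x := (hψ.differentiable two_ne_zero x).hasDerivAt
  have hψ'' : HasDerivAt (deriv ψ) (deriv (deriv ψ) x) x :=
    ((hψ.iterate_deriv' 1 1).differentiable one_ne_zero x).hasDerivAt
  have hx : HasDerivAt (fun t : ℝ => (t : ℂ)) 1 x := by
    simpa using (hasDerivAt_id x).ofReal_comp
  have hxψ : HasDerivAt (fun t : ℝ => (t : ℂ) • ψ t) ((x : ℂ) • deriv ψ x + ψ x) x := by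
    have := hx.smul hψ'
    rwa [one_smul] at this
  exact (((hψ''.mvec alpha1).const_smul (-I * cexp (-(θ / 2 : ℝ) * I))).sub
    ((hxψ.mvec alpha2).const_smul (cexp ((θ / 2 : ℝ) * I)))).add
    ((hψ'.mvec alpha3).const_smul (m : ℂ))

lemma Hpt_Hpt_apply {θ m : ℝ} {ψ : ℝ → E4} (hψ : ContDiff ℝ 2 ψ) (x : ℝ) :
    Hpt θ m (Hpt θ m ψ) x
      = Spt θ ψ x + ((m : ℂ) ^ 2) • ψ x + mvec (I • (alpha1 * alpha2)) (ψ x) := by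
  rw [Hpt, (hasDerivAt_Hpt hψ x).deriv]
  simp only [Hpt, Spt, mvec_eq_toEuclideanCLM, map_add, map_sub, map_smul]
  simp only [← mul_apply_eq_comp, ← map_mul, alpha1_mul_self, alpha2_mul_self, alpha3_mul_self,
    alpha2_mul_alpha1, alpha3_mul_alpha1, alpha3_mul_alpha2, map_neg, map_one, neg_apply,
    one_apply_eq_self, smul_apply]
  have hwu : cexp (-(θ / 2 : ℝ) * I) * cexp ((θ / 2 : ℝ) * I) = 1 := by
    rw [← Complex.exp_add, neg_mul, neg_add_cancel, Complex.exp_zero]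
  have hu : cexp ((θ : ℝ) * I) = cexp ((θ / 2 : ℝ) * I) ^ 2 := by
    rw [← Complex.exp_nat_mul]; push_cast; ring_nf
  have hw : cexp (-(θ : ℝ) * I) = cexp (-(θ / 2 : ℝ) * I) ^ 2 := by
    rw [← Complex.exp_nat_mul]; push_cast; ring_nf
  rw [hu, hw]
  generalize cexp ((θ / 2 : ℝ) * I) = u at hwu ⊢
  generalize cexp (-(θ / 2 : ℝ) * I) = w at hwu ⊢
  -- `(-i)² = -1` enters the coefficient of `ψ''`, and `e^{-iθ/2} e^{iθ/2} = 1` that of `α₁α₂ψ`.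
  linear_combination (norm := module) (w ^ 2 * I_sq) • deriv (deriv ψ) x
    + (I * hwu) • Matrix.toEuclideanCLM (𝕜 := ℂ) (alpha1 * alpha2) (ψ x)

theorem Htheta_sq_eq_Stheta_add_msq_general (θ m : ℝ) (ψ : ℝ → E4) (hψ : ContDiff ℝ (⊤ : ℕ∞) ψ) :
    (∀ x : ℝ, Hpt θ m (Hpt θ m ψ) x
        = Spt θ ψ x + ((m : ℂ) ^ 2) • ψ x + mvec (Complex.I • (alpha1 * alpha2)) (ψ x)) ∧
      Complex.I • (alpha1 * alpha2) = Matrix.diagonal ![-1, 1, -1, 1] :=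
  ⟨Hpt_Hpt_apply (hψ.of_le (WithTop.coe_le_coe.mpr le_top)), I_smul_alpha1_mul_alpha2⟩

/-- for every `ψ ∈ C_c^∞(ℝ; ℂ⁴)` one has the supersymmetric identity
`H_θ(H_θ ψ) = (S_θ + m²)ψ + i α₁ α₂ ψ`, and `iα₁α₂ = diag(-1, 1, -1, 1)`. -/
theorem Htheta_sq_eq_Stheta_add_msq (θ m : ℝ) (hθ : θ ∈ Set.Ioo (-(Real.pi / 2)) (Real.pi / 2))
    (hm : 0 ≤ m) (ψ : ℝ → E4) (hψ : ContDiff ℝ (⊤ : ℕ∞) ψ) (hsupp : HasCompactSupport ψ) :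
    (∀ x : ℝ, Hpt θ m (Hpt θ m ψ) x
        = Spt θ ψ x + ((m : ℂ) ^ 2) • ψ x + mvec (Complex.I • (alpha1 * alpha2)) (ψ x)) ∧
      Complex.I • (alpha1 * alpha2) = Matrix.diagonal ![-1, 1, -1, 1] :=
  Htheta_sq_eq_Stheta_add_msq_general θ m ψ hψ
end
end

section
/- Let θ ∈ (-π/2,π/2) and m ≥ 0. For every z ∈ ℂ, z belongs to the resolvent set ρ(H_θ) if and only if the complex conjugate z̄ belongs to the resolvent set ρ(H_{-θ}). -/
noncomputable section

open MeasureTheory Filter Complex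
open scoped InnerProductSpace

/-! The antiunitary map `J v = α₃ v̄` on `ℂ⁴` satisfies `J α₁ = -α₁ J`, `J α₂ = α₂ J` and
`J α₃ = α₃ J`, while conjugation turns `-i e^{-iθ/2}` into `i e^{iθ/2}` and `e^{iθ/2}` into
`e^{-iθ/2}`. Hence `J` maps the symbol of `H_θ` to that of `H_{-θ}`, and, being conjugate-linear,
commutes with weak derivatives. Lifted pointwise to `L²`, it gives a conjugate-linear isometric
involution `C` with `C H_θ = H_{-θ} C`, so `C R C` is the resolvent of `H_{-θ}` at `z̄` whenever
`R` is the resolvent of `H_θ` at `z`. -/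

namespace ContinuousLinearEquiv

variable {X E F : Type*} [MeasurableSpace X] {μ : Measure X} [NormedAddCommGroup E]
  [NormedAddCommGroup F] {𝕜 𝕜' : Type*} [RCLike 𝕜] [RCLike 𝕜'] [NormedSpace 𝕜 E] [NormedSpace 𝕜' F]
  [NormedSpace ℝ E] [NormedSpace ℝ F] [CompleteSpace E] [CompleteSpace F]
  {σ : 𝕜 →+* 𝕜'} {σ' : 𝕜' →+* 𝕜} [RingHomInvPair σ σ'] [RingHomInvPair σ' σ]
  [RingHomIsometric σ] [RingHomIsometric σ']

theorem integral_comp_commSL (hσ : ∀ (r : ℝ) (x : 𝕜), σ (r • x) = r • σ x) (L : E ≃SL[σ] F)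
    (φ : X → E) : ∫ x, L (φ x) ∂μ = L (∫ x, φ x ∂μ) := by
  by_cases hφ : Integrable φ μ
  · exact (L : E →SL[σ] F).integral_comp_commSL hσ hφ
  · have hLφ : ¬ Integrable (fun x => L (φ x)) μ := fun h => hφ <| by
      simpa using (L.symm : F →SL[σ'] E).integrable_comp h
    rw [integral_undef hφ, integral_undef hLφ, map_zero]

end ContinuousLinearEquiv

section WeakDeriv

variable {E F : Type*} [NormedAddCommGroup E] [NormedSpace ℂ E] [NormedAddCommGroup F]
  [NormedSpace ℂ F]

theorem IsWeakDeriv.congr_left {f f' g : ℝ → E} (h : IsWeakDeriv f g) (hf : f =ᵐ[volume] f') :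
    IsWeakDeriv f' g := fun φ hφ hφc => by
  rw [← h φ hφ hφc]
  exact integral_congr_ae (hf.mono fun x hx => by simp only [hx])

/-- Test `L ∘ f` against `φ` by testing `f` against `φ̄`. -/
theorem IsWeakDeriv.comp_conjCLE [CompleteSpace E] [CompleteSpace F] {f g : ℝ → E}
    (h : IsWeakDeriv f g) (L : E ≃L⋆[ℂ] F) : IsWeakDeriv (L ∘ f) (L ∘ g) := by
  intro φ hφ hφc
  have hσ (r : ℝ) (c : ℂ) : starRingEnd ℂ (r • c) = r • starRingEnd ℂ c := by simp
  have smul_eq (c : ℂ) (v : E) : c • L v = L (star c • v) := by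
    rw [map_smulₛₗ, starRingEnd_apply, star_star]
  have hconj := h (fun x => star (φ x)) ((starL' ℝ : ℂ ≃L[ℝ] ℂ).contDiff.comp hφ)
    (hφc.comp_left (star_zero _))
  simp only [Function.comp_apply, smul_eq, ← deriv.star, L.integral_comp_commSL hσ, hconj, map_neg]

theorem MemFormDom.congr_ae {f f' : ℝ → E} (h : MemFormDom f) (hf : f =ᵐ[volume] f') :
    MemFormDom f' := by
  obtain ⟨hf2, ⟨g, hg2, hfg⟩, hxf⟩ := h
  exact ⟨hf2.ae_eq hf, ⟨g, hg2, hfg.congr_left hf⟩,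
    hxf.ae_eq (hf.mono fun x hx => by simp only [hx])⟩

theorem MemFormDom.comp_conjCLE [CompleteSpace E] [CompleteSpace F] {f : ℝ → E}
    (h : MemFormDom f) (L : E ≃L⋆[ℂ] F) : MemFormDom (L ∘ f) := by
  obtain ⟨hf2, ⟨g, hg2, hfg⟩, hxf⟩ := h
  refine ⟨(L : E →SL[starRingEnd ℂ] F).comp_memLp' hf2,
    ⟨L ∘ g, (L : E →SL[starRingEnd ℂ] F).comp_memLp' hg2, hfg.comp_conjCLE L⟩, ?_⟩
  convert (L : E →SL[starRingEnd ℂ] F).comp_memLp' hxf using 2 with x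
  simp only [Function.comp_apply, ContinuousLinearEquiv.coe_coe, map_smulₛₗ, conj_ofReal]

end WeakDeriv

def alpha3Conj : E4 ≃ₗᵢ⋆[ℂ] E4 where
  toFun v := mvec alpha3 (WithLp.toLp 2 fun i => starRingEnd ℂ (v i))
  invFun v := mvec alpha3 (WithLp.toLp 2 fun i => starRingEnd ℂ (v i))
  map_add' v w := by
    ext i; fin_cases i <;> simp [mvec, alpha3, dotProduct, Fin.sum_univ_four, add_comm]
  map_smul' c v := by ext i; fin_cases i <;> simp [mvec, alpha3, dotProduct, Fin.sum_univ_four]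
  left_inv v := by ext i; fin_cases i <;> simp [mvec, alpha3, dotProduct, Fin.sum_univ_four]
  right_inv v := by ext i; fin_cases i <;> simp [mvec, alpha3, dotProduct, Fin.sum_univ_four]
  norm_map' v := by
    simp [EuclideanSpace.norm_eq, Fin.sum_univ_four, mvec, alpha3, dotProduct]
    ring_nf

lemma alpha3Conj_apply_apply (v : E4) (i : Fin 4) :
    alpha3Conj v i = mvec alpha3 (WithLp.toLp 2 fun i => starRingEnd ℂ (v i)) i :=
  rfl

lemma alpha3Conj_mvec_alpha1 (v : E4) :
    alpha3Conj (mvec alpha1 v) = -mvec alpha1 (alpha3Conj v) := by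
  ext i; fin_cases i <;>
    simp [alpha3Conj_apply_apply, mvec, alpha1, alpha3, dotProduct, Fin.sum_univ_four]

lemma alpha3Conj_mvec_alpha2 (v : E4) :
    alpha3Conj (mvec alpha2 v) = mvec alpha2 (alpha3Conj v) := by
  ext i; fin_cases i <;>
    simp [alpha3Conj_apply_apply, mvec, alpha2, alpha3, dotProduct, Fin.sum_univ_four]

lemma alpha3Conj_mvec_alpha3 (v : E4) :
    alpha3Conj (mvec alpha3 v) = mvec alpha3 (alpha3Conj v) := by
  ext i; fin_cases i <;>
    simp [alpha3Conj_apply_apply, mvec, alpha3, dotProduct, Fin.sum_univ_four]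

/-- The right-hand side of `InGraphH` at the point `x`, with `w` standing for `ψ'(x)` and `v` for
`ψ(x)`. -/
def diracSymbol (θ m x : ℝ) (w v : E4) : E4 :=
  (-I * exp (-(θ / 2 : ℝ) * I)) • mvec alpha1 w
    - exp ((θ / 2 : ℝ) * I) • mvec alpha2 ((x : ℂ) • v) + (m : ℂ) • mvec alpha3 v

lemma alpha3Conj_diracSymbol (θ m x : ℝ) (w v : E4) :
    alpha3Conj (diracSymbol θ m x w v) = diracSymbol (-θ) m x (alpha3Conj w) (alpha3Conj v) := by
  simp only [diracSymbol, map_add, map_sub, map_smulₛₗ, alpha3Conj_mvec_alpha1,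
    alpha3Conj_mvec_alpha2, alpha3Conj_mvec_alpha3, ← exp_conj, map_mul, map_neg, conj_I,
    conj_ofReal, smul_neg, ← neg_smul]
  push_cast
  ring_nf

def alpha3ConjL2 : HS →L⋆[ℂ] HS :=
  (alpha3Conj.toContinuousLinearEquiv : E4 →L⋆[ℂ] E4).compLpL 2 volume

lemma alpha3ConjL2_coeFn (ψ : HS) : alpha3ConjL2 ψ =ᵐ[volume] fun x => alpha3Conj (ψ x) :=
  ContinuousLinearMap.coeFn_compLpL _ ψ

lemma alpha3ConjL2_involutive : Function.Involutive alpha3ConjL2 := fun ψ => by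
  apply Lp.ext
  filter_upwards [alpha3ConjL2_coeFn (alpha3ConjL2 ψ), alpha3ConjL2_coeFn ψ] with x h1 h2
  rw [h1, h2]
  exact alpha3Conj.symm_apply_apply (ψ x)

theorem InGraphH.alpha3ConjL2 {θ m : ℝ} {ψ χ : HS} (h : InGraphH θ m ψ χ) :
    InGraphH (-θ) m (alpha3ConjL2 ψ) (alpha3ConjL2 χ) := by
  obtain ⟨hψ, g, hg, hχ⟩ := h
  have hCψ := alpha3ConjL2_coeFn ψ
  let J : E4 ≃L⋆[ℂ] E4 := alpha3Conj.toContinuousLinearEquiv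
  refine ⟨(hψ.comp_conjCLE J).congr_ae hCψ.symm, J ∘ g,
    (hg.comp_conjCLE J).congr_left hCψ.symm, ?_⟩
  filter_upwards [alpha3ConjL2_coeFn χ, hχ, hCψ] with x hCχx hχx hCψx
  rw [hCχx, hχx, hCψx]
  exact alpha3Conj_diracSymbol θ m x (g x) (ψ x)

theorem inGraphH_neg_alpha3ConjL2_iff (θ m : ℝ) (ψ χ : HS) :
    InGraphH (-θ) m (alpha3ConjL2 ψ) (alpha3ConjL2 χ) ↔ InGraphH θ m ψ χ := by
  refine ⟨fun h => ?_, InGraphH.alpha3ConjL2⟩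
  simpa only [neg_neg, alpha3ConjL2_involutive _] using h.alpha3ConjL2

theorem IsResolventOf.conjugate {G G' : HS → HS → Prop} {z : ℂ} {R : HS →L[ℂ] HS}
    (hR : IsResolventOf G z R) (C : HS →L⋆[ℂ] HS) (hC : Function.Involutive C)
    (hG : ∀ ψ χ, G' (C ψ) (C χ) ↔ G ψ χ) :
    IsResolventOf G' (starRingEnd ℂ z) ((C.comp R).comp C) := by
  obtain ⟨hRgraph, hRinv⟩ := hR
  refine ⟨fun χ => ?_, fun ψ χ h => ?_⟩
  · simpa [hC _] using (hG _ _).2 (hRgraph (C χ))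
  · have := hRinv _ _ ((hG (C ψ) (C χ)).1 (by simpa [hC _] using h))
    change C (R (C (χ - starRingEnd ℂ z • ψ))) = ψ
    rw [map_sub, map_smulₛₗ, conj_conj, this, hC]

theorem InResolventSetH.neg_conj {θ m : ℝ} {z : ℂ} (h : InResolventSetH θ m z) :
    InResolventSetH (-θ) m (starRingEnd ℂ z) :=
  let ⟨_, hR⟩ := h
  ⟨_, hR.conjugate alpha3ConjL2 alpha3ConjL2_involutive (inGraphH_neg_alpha3ConjL2_iff θ m)⟩

theorem resolventSet_conj_general (θ m : ℝ) (z : ℂ) :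
    InResolventSetH θ m z ↔ InResolventSetH (-θ) m (starRingEnd ℂ z) :=
  ⟨InResolventSetH.neg_conj, fun h => by simpa using h.neg_conj⟩

/-- `z ∈ ρ(H_θ)` if and only if `z̄ ∈ ρ(H_{-θ})`. -/
theorem resolventSet_conj (θ m : ℝ) (hθ : θ ∈ Set.Ioo (-(Real.pi / 2)) (Real.pi / 2))
    (hm : 0 ≤ m) (z : ℂ) :
    InResolventSetH θ m z ↔ InResolventSetH (-θ) m (starRingEnd ℂ z) :=
  resolventSet_conj_general θ m z
end
end

section
/- Let θ ∈ (-π/2,π/2) and m ≥ 0. The families {χ^j_n} and {χ̃^j_n} are biorthonormal: for all integers n, n' ≥ 1 and all i, j ∈ {1,2,3,4}, the inner product (χ̃^i_n, χ^j_{n'}) equals δ_{ij}δ_{nn'}. -/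
/-!
Pointwise, `⟪χ̃ⁱ_n, χʲ_{n'}⟫` is `conj φ̃_n · φ_{n'}` weighted by the first and third components
of `uⁱ, uʲ`, plus `conj φ̃_{n-1} · φ_{n'-1}` weighted by the second and fourth. Integrating and
using `(φ̃_p, φ_q) = δ_{pq}`, both terms vanish when `n ≠ n'`, and when `n = n'` they add up to
`⟪uⁱ, uʲ⟫ = δ_{ij}`: the raw vectors are pairwise orthogonal because
`2n = (√(2n+m²) - m)(√(2n+m²) + m)`.
-/

noncomputable section

open MeasureTheory Filter Complex
open scoped InnerProductSpace

/-- The rotated Hermite function `φ_n(x) = h_n(e^{iθ/2} x)`, where `Hh n` is the entire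
extension of the `n`-th Hermite function. -/
def phiFun (Hh : ℕ → ℂ → ℂ) (θ : ℝ) (n : ℕ) : ℝ → ℂ := fun x : ℝ =>
  Hh n (Complex.exp ((θ / 2 : ℝ) * Complex.I) * (x : ℂ))

/-- The four unnormalized vectors from which `u¹, u², u³, u⁴` are obtained. -/
def vRaw (m : ℝ) (n : ℕ) : Fin 4 → E4 :=
  ![(WithLp.equiv 2 (Fin 4 → ℂ)).symm
      ![(Real.sqrt (2 * n) : ℂ), ((Real.sqrt (2 * n + m ^ 2) - m : ℝ) : ℂ),
        (Real.sqrt (2 * n) : ℂ), ((Real.sqrt (2 * n + m ^ 2) - m : ℝ) : ℂ)],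
    (WithLp.equiv 2 (Fin 4 → ℂ)).symm
      ![-(Real.sqrt (2 * n) : ℂ), ((Real.sqrt (2 * n + m ^ 2) + m : ℝ) : ℂ),
        (Real.sqrt (2 * n) : ℂ), (-(Real.sqrt (2 * n + m ^ 2) + m : ℝ) : ℂ)],
    (WithLp.equiv 2 (Fin 4 → ℂ)).symm
      ![-(Real.sqrt (2 * n) : ℂ), ((Real.sqrt (2 * n + m ^ 2) + m : ℝ) : ℂ),
        -(Real.sqrt (2 * n) : ℂ), ((Real.sqrt (2 * n + m ^ 2) + m : ℝ) : ℂ)],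
    (WithLp.equiv 2 (Fin 4 → ℂ)).symm
      ![(Real.sqrt (2 * n) : ℂ), ((Real.sqrt (2 * n + m ^ 2) - m : ℝ) : ℂ),
        -(Real.sqrt (2 * n) : ℂ), ((-(Real.sqrt (2 * n + m ^ 2)) + m : ℝ) : ℂ)]]

/-- The unit vectors `u¹, u², u³, u⁴` in `ℂ⁴`. -/
def uVec (m : ℝ) (n : ℕ) : Fin 4 → E4 := fun j => ((‖vRaw m n j‖ : ℝ) : ℂ)⁻¹ • vRaw m n j

/-- The `i`-th component of a vector in `ℂ⁴`. -/
def vcomp (v : E4) (i : Fin 4) : ℂ := (WithLp.equiv 2 (Fin 4 → ℂ)) v i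

/-- The eigenfunction `χ^j_n = (u^j₁ φ_n, u^j₂ φ_{n-1}, u^j₃ φ_n, u^j₄ φ_{n-1})ᵀ`
(as a function `ℝ → ℂ⁴`); the functions `χ̃^j_n` are obtained replacing `θ` by `-θ`. -/
def chiFun (Hh : ℕ → ℂ → ℂ) (θ m : ℝ) (n : ℕ) (j : Fin 4) : ℝ → E4 := fun x : ℝ =>
  (WithLp.equiv 2 (Fin 4 → ℂ)).symm
    ![vcomp (uVec m n j) 0 * phiFun Hh θ n x,
      vcomp (uVec m n j) 1 * phiFun Hh θ (n - 1) x,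
      vcomp (uVec m n j) 2 * phiFun Hh θ n x,
      vcomp (uVec m n j) 3 * phiFun Hh θ (n - 1) x]

open ComplexConjugate

theorem orthonormal_normalized_of_pairwise_inner_eq_zero {𝕜 E ι : Type*} [RCLike 𝕜]
    [NormedAddCommGroup E] [InnerProductSpace 𝕜 E] {v : ι → E} (hv : ∀ i, v i ≠ 0)
    (horth : Pairwise fun i j => ⟪v i, v j⟫_𝕜 = 0) :
    Orthonormal 𝕜 fun i => (‖v i‖ : 𝕜)⁻¹ • v i := by
  refine ⟨fun i => ?_, fun i j hij => ?_⟩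
  · rw [norm_smul, norm_inv, RCLike.norm_ofReal, abs_norm,
      inv_mul_cancel₀ (norm_ne_zero_iff.2 (hv i))]
  · simp only [inner_smul_left, inner_smul_right, horth hij, mul_zero]

section Spinors

variable (m : ℝ) (n : ℕ)

theorem vRaw_ne_zero (hn : 1 ≤ n) (i : Fin 4) : vRaw m n i ≠ 0 := by
  have hsqrt : Real.sqrt (2 * n) ≠ 0 := Real.sqrt_ne_zero'.2 (by positivity)
  intro h
  have h0 := congrArg (fun w => vcomp w 0) h
  fin_cases i <;> simp_all [vRaw]

/-- With `a = √(2n)` and `s = √(2n + m²)`, every off-diagonal entry of the Gram matrix is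
`0` or `-2 (a² - (s - m)(s + m))`. -/
theorem vRaw_pairwise_inner_eq_zero : Pairwise fun i j => ⟪vRaw m n i, vRaw m n j⟫_ℂ = 0 := by
  have key : ((Real.sqrt (2 * n) : ℝ) : ℂ) ^ 2
      = ((Real.sqrt (2 * n + m ^ 2) : ℝ) - m : ℂ) * ((Real.sqrt (2 * n + m ^ 2) : ℝ) + m) := by
    have h2n : (0 : ℝ) ≤ 2 * n := by positivity
    have ha : ((Real.sqrt (2 * n) : ℝ) : ℂ) ^ 2 = 2 * n := by
      rw [← ofReal_pow, Real.sq_sqrt h2n]; push_cast; rfl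
    have hs : ((Real.sqrt (2 * n + m ^ 2) : ℝ) : ℂ) ^ 2 = 2 * n + m ^ 2 := by
      rw [← ofReal_pow, Real.sq_sqrt (by positivity)]; push_cast; rfl
    linear_combination ha - hs
  intro i j hij
  fin_cases i <;> fin_cases j <;> (try exact absurd rfl hij) <;>
    · simp only [vRaw, PiLp.inner_apply, RCLike.inner_apply, Fin.sum_univ_four, Fin.reduceFinMk,
        Fin.isValue, WithLp.equiv_symm_apply, Matrix.cons_val_zero, Matrix.cons_val_one,
        Matrix.head_cons, Matrix.cons_val_two, Matrix.tail_cons, Matrix.cons_val_three,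
        map_neg, conj_ofReal]
      simp only [ofReal_sub, ofReal_add, ofReal_neg]
      first
        | ring1
        | linear_combination (-2) * key

theorem orthonormal_uVec (hn : 1 ≤ n) : Orthonormal ℂ (uVec m n) :=
  orthonormal_normalized_of_pairwise_inner_eq_zero (vRaw_ne_zero m n hn)
    (vRaw_pairwise_inner_eq_zero m n)

end Spinors

theorem MeasureTheory.MemLp.integrable_conj_mul {α : Type*} [MeasurableSpace α] {μ : Measure α}
    {f g : α → ℂ} (hf : MemLp f 2 μ) (hg : MemLp g 2 μ) :
    Integrable (fun x => conj (f x) * g x) μ :=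
  hf.star.integrable_mul hg

theorem inner_E4_eq (u v : E4) :
    ⟪u, v⟫_ℂ = conj (vcomp u 0) * vcomp v 0 + conj (vcomp u 1) * vcomp v 1
      + conj (vcomp u 2) * vcomp v 2 + conj (vcomp u 3) * vcomp v 3 := by
  simp only [PiLp.inner_apply, RCLike.inner_apply, Fin.sum_univ_four, vcomp,
    WithLp.equiv_apply]
  ring

section Pairing

variable (Hh : ℕ → ℂ → ℂ) (θ θ' m : ℝ) (n n' : ℕ) (i j : Fin 4)

theorem inner_chiFun_apply (x : ℝ) :
    ⟪chiFun Hh θ m n i x, chiFun Hh θ' m n' j x⟫_ℂ =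
      (conj (vcomp (uVec m n i) 0) * vcomp (uVec m n' j) 0
          + conj (vcomp (uVec m n i) 2) * vcomp (uVec m n' j) 2)
        * (conj (phiFun Hh θ n x) * phiFun Hh θ' n' x)
      + (conj (vcomp (uVec m n i) 1) * vcomp (uVec m n' j) 1
          + conj (vcomp (uVec m n i) 3) * vcomp (uVec m n' j) 3)
        * (conj (phiFun Hh θ (n - 1) x) * phiFun Hh θ' (n' - 1) x) := by
  simp only [chiFun, PiLp.inner_apply, RCLike.inner_apply, Fin.sum_univ_four,
    WithLp.equiv_symm_apply, Matrix.cons_val_zero, Matrix.cons_val_one, Matrix.head_cons,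
    Matrix.cons_val_two, Matrix.tail_cons, Matrix.cons_val_three, map_mul]
  ring

theorem integral_inner_chiFun (hφ : ∀ k, MemLp (phiFun Hh θ k) 2 volume)
    (hφ' : ∀ k, MemLp (phiFun Hh θ' k) 2 volume) :
    ∫ x, ⟪chiFun Hh θ m n i x, chiFun Hh θ' m n' j x⟫_ℂ =
      (conj (vcomp (uVec m n i) 0) * vcomp (uVec m n' j) 0
          + conj (vcomp (uVec m n i) 2) * vcomp (uVec m n' j) 2)
        * (∫ x, conj (phiFun Hh θ n x) * phiFun Hh θ' n' x)
      + (conj (vcomp (uVec m n i) 1) * vcomp (uVec m n' j) 1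
          + conj (vcomp (uVec m n i) 3) * vcomp (uVec m n' j) 3)
        * (∫ x, conj (phiFun Hh θ (n - 1) x) * phiFun Hh θ' (n' - 1) x) := by
  simp only [inner_chiFun_apply]
  rw [integral_add (((hφ n).integrable_conj_mul (hφ' n')).const_mul _)
      (((hφ (n - 1)).integrable_conj_mul (hφ' (n' - 1))).const_mul _),
    integral_const_mul, integral_const_mul]

end Pairing

theorem chi_biorthonormal_general (θ m : ℝ) (Hh : ℕ → ℂ → ℂ)
    (hmem : ∀ n, MemLp (phiFun Hh θ n) 2 volume ∧ MemLp (phiFun Hh (-θ) n) 2 volume)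
    (hbi : ∀ p q : ℕ, ∫ x : ℝ, (starRingEnd ℂ) (phiFun Hh (-θ) p x) * phiFun Hh θ q x
      = if p = q then 1 else 0) :
    ∀ n n' : ℕ, 1 ≤ n → 1 ≤ n' → ∀ i j : Fin 4,
      ∫ x : ℝ, (⟪chiFun Hh (-θ) m n i x, chiFun Hh θ m n' j x⟫_ℂ)
        = if i = j ∧ n = n' then 1 else 0 := by
  intro n n' hn hn' i j
  rw [integral_inner_chiFun Hh (-θ) θ m n n' i j (fun k => (hmem k).2) (fun k => (hmem k).1),
    hbi, hbi]
  rcases eq_or_ne n n' with rfl | hne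
  · simp only [if_true, and_true]
    rw [← orthonormal_iff_ite.mp (orthonormal_uVec m n hn) i j, inner_E4_eq]
    ring
  · have hne' : n - 1 ≠ n' - 1 := by omega
    simp [hne, hne']

/-- the families `{χ^j_n}` and `{χ̃^j_n}` are biorthonormal:
`(χ̃^i_n, χ^j_{n'}) = δ_{ij} δ_{nn'}`.
The hypotheses state that `Hh n` is the entire extension of the `n`-th `L²`-normalized
Hermite function; `hmem` records `φ_n, φ̃_n ∈ L²` and `hbi` the biorthonormality
`(φ̃_p, φ_q) = δ_{pq}`. -/
theorem chi_biorthonormal (θ m : ℝ) (hθ : θ ∈ Set.Ioo (-(Real.pi / 2)) (Real.pi / 2))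
    (hm : 0 ≤ m) (Hh : ℕ → ℂ → ℂ) (hent : ∀ n, Differentiable ℂ (Hh n))
    (hODE : ∀ (n : ℕ) (t : ℂ),
      -(deriv (deriv (Hh n)) t) + t ^ 2 * Hh n t = (2 * (n : ℂ) + 1) * Hh n t)
    (e : ℕ → Lp ℂ 2 (volume : Measure ℝ))
    (he : ∀ n, (e n : ℝ → ℂ) =ᵐ[volume] fun x : ℝ => Hh n (x : ℂ))
    (horth : Orthonormal ℂ e)
    (hcomp : (Submodule.span ℂ (Set.range e)).topologicalClosure = ⊤)
    (hmem : ∀ n, MemLp (phiFun Hh θ n) 2 volume ∧ MemLp (phiFun Hh (-θ) n) 2 volume)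
    (hbi : ∀ p q : ℕ, ∫ x : ℝ, (starRingEnd ℂ) (phiFun Hh (-θ) p x) * phiFun Hh θ q x
      = if p = q then 1 else 0) :
    ∀ n n' : ℕ, 1 ≤ n → 1 ≤ n' → ∀ i j : Fin 4,
      ∫ x : ℝ, (⟪chiFun Hh (-θ) m n i x, chiFun Hh θ m n' j x⟫_ℂ)
        = if i = j ∧ n = n' then 1 else 0 :=
  chi_biorthonormal_general θ m Hh hmem hbi
end
end

section
/- Let θ ∈ (-π/2,π/2) and m ≥ 0. For every integer n ≥ 1, the operator norms of the two spectral projectors coincide: ‖P_n^+‖ = ‖P_n^-‖. -/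
noncomputable section

open MeasureTheory Filter Complex
open scoped InnerProductSpace

/-- The spectral projector `P_n^+ = χ¹_n(χ̃¹_n, ·) + χ²_n(χ̃²_n, ·)` on `L²(ℝ; ℂ⁴)`. -/
def Pplus (Hh : ℕ → ℂ → ℂ) (θ m : ℝ)
    (hχ : ∀ (n : ℕ) (j : Fin 4), MemLp (chiFun Hh θ m n j) 2 volume)
    (hχt : ∀ (n : ℕ) (j : Fin 4), MemLp (chiFun Hh (-θ) m n j) 2 volume)
    (n : ℕ) : HS →L[ℂ] HS :=
  (innerSL ℂ ((hχt n 0).toLp (chiFun Hh (-θ) m n 0))).smulRight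
      ((hχ n 0).toLp (chiFun Hh θ m n 0)) +
    (innerSL ℂ ((hχt n 1).toLp (chiFun Hh (-θ) m n 1))).smulRight
      ((hχ n 1).toLp (chiFun Hh θ m n 1))

/-- The spectral projector `P_n^- = χ³_n(χ̃³_n, ·) + χ⁴_n(χ̃⁴_n, ·)` on `L²(ℝ; ℂ⁴)`. -/
def Pminus (Hh : ℕ → ℂ → ℂ) (θ m : ℝ)
    (hχ : ∀ (n : ℕ) (j : Fin 4), MemLp (chiFun Hh θ m n j) 2 volume)
    (hχt : ∀ (n : ℕ) (j : Fin 4), MemLp (chiFun Hh (-θ) m n j) 2 volume)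
    (n : ℕ) : HS →L[ℂ] HS :=
  (innerSL ℂ ((hχt n 2).toLp (chiFun Hh (-θ) m n 2))).smulRight
      ((hχ n 2).toLp (chiFun Hh θ m n 2)) +
    (innerSL ℂ ((hχt n 3).toLp (chiFun Hh (-θ) m n 3))).smulRight
      ((hχ n 3).toLp (chiFun Hh θ m n 3))

/-! Multiplication by `α₀ = diag(1, 1, -1, -1)` is a unitary of `ℂ⁴` mapping `u²` to `u³` and `u¹`
to `u⁴`; acting pointwise it is a unitary `U` of `L²(ℝ; ℂ⁴)` with `U χ²_n = χ³_n`, `U χ¹_n = χ⁴_n`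
and likewise for the `χ̃^j_n`. Since `U (χ̃, ·) χ U⁻¹ = (U χ̃, ·) U χ`, this gives
`P_n^- = U P_n^+ U⁻¹`, and conjugation by a unitary preserves the operator norm. -/

section CompLp

variable {α 𝕜 E F : Type*} {mα : MeasurableSpace α} {μ : Measure α} {p : ENNReal} [Fact (1 ≤ p)]
  [NontriviallyNormedField 𝕜] [NormedAddCommGroup E] [NormedSpace 𝕜 E]
  [NormedAddCommGroup F] [NormedSpace 𝕜 F]

def LinearIsometry.compLp (L : E →ₗᵢ[𝕜] F) : Lp E p μ →ₗᵢ[𝕜] Lp F p μ where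
  toLinearMap := (L.toContinuousLinearMap.compLpL p μ).toLinearMap
  norm_map' f := by
    rw [ContinuousLinearMap.coe_coe, Lp.norm_def, Lp.norm_def, eLpNorm_congr_norm_ae (g := f)]
    filter_upwards [ContinuousLinearMap.coeFn_compLpL (p := p) (μ := μ) L.toContinuousLinearMap f]
      with a h
    rw [h, LinearIsometry.coe_toContinuousLinearMap, L.norm_map]

theorem LinearIsometry.coeFn_compLp (L : E →ₗᵢ[𝕜] F) (f : Lp E p μ) :
    (L.compLp f : α → F) =ᵐ[μ] fun a => L (f a) :=
  ContinuousLinearMap.coeFn_compLpL _ f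

def LinearIsometryEquiv.compLp (L : E ≃ₗᵢ[𝕜] F) : Lp E p μ ≃ₗᵢ[𝕜] Lp F p μ :=
  .ofSurjective L.toLinearIsometry.compLp fun g =>
    ⟨L.symm.toLinearIsometry.compLp g, Lp.ext <| by
      filter_upwards [L.toLinearIsometry.coeFn_compLp (L.symm.toLinearIsometry.compLp g),
        L.symm.toLinearIsometry.coeFn_compLp g] with a h₁ h₂
      simp [h₁, h₂]⟩

theorem LinearIsometryEquiv.coeFn_compLp (L : E ≃ₗᵢ[𝕜] F) (f : Lp E p μ) :
    (L.compLp f : α → F) =ᵐ[μ] fun a => L (f a) :=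
  L.toLinearIsometry.coeFn_compLp f

theorem LinearIsometryEquiv.compLp_toLp (L : E ≃ₗᵢ[𝕜] F) {f : α → E} {g : α → F}
    (hf : MemLp f p μ) (hg : MemLp g p μ) (h : ∀ a, g a = L (f a)) :
    L.compLp (hf.toLp f) = hg.toLp g := by
  refine Lp.ext ?_
  filter_upwards [L.coeFn_compLp (hf.toLp f), hf.coeFn_toLp, hg.coeFn_toLp] with a h₁ h₂ h₃
  rw [h₁, h₂, h₃, h]

end CompLp

theorem LinearIsometryEquiv.comp_smulRight_innerSL_comp_symm {𝕜 E : Type*} [RCLike 𝕜]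
    [NormedAddCommGroup E] [InnerProductSpace 𝕜 E] (U : E ≃ₗᵢ[𝕜] E) (a b : E) :
    (U : E →L[𝕜] E) ∘L (innerSL 𝕜 a).smulRight b ∘L (U.symm : E →L[𝕜] E) =
      (innerSL 𝕜 (U a)).smulRight (U b) := by
  ext f
  simp [LinearIsometryEquiv.inner_map_eq_flip]

-- Multiplication by the Dirac matrix `alpha0 = diag(1, 1, -1, -1)`.
def signFlip : E4 ≃ₗᵢ[ℂ] E4 :=
  LinearIsometryEquiv.piLpCongrRight 2 ![.refl ℂ ℂ, .refl ℂ ℂ, .neg ℂ, .neg ℂ]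

theorem vRaw_two_eq_signFlip (m : ℝ) (n : ℕ) : vRaw m n 2 = signFlip (vRaw m n 1) := by
  ext i
  fin_cases i <;> simp [vRaw, signFlip]

theorem vRaw_three_eq_signFlip (m : ℝ) (n : ℕ) : vRaw m n 3 = signFlip (vRaw m n 0) := by
  ext i
  fin_cases i <;> simp [vRaw, signFlip, neg_add_eq_sub]

theorem uVec_eq_signFlip {m : ℝ} {n : ℕ} {j k : Fin 4}
    (h : vRaw m n j = signFlip (vRaw m n k)) : uVec m n j = signFlip (uVec m n k) := by
  simp [uVec, h]

theorem chiFun_eq_signFlip (Hh : ℕ → ℂ → ℂ) (θ : ℝ) {m : ℝ} {n : ℕ} {j k : Fin 4}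
    (h : uVec m n j = signFlip (uVec m n k)) (x : ℝ) :
    chiFun Hh θ m n j x = signFlip (chiFun Hh θ m n k x) := by
  ext i
  fin_cases i <;> simp [chiFun, h, vcomp, signFlip]

theorem Pminus_eq_conj_Pplus (Hh : ℕ → ℂ → ℂ) (θ m : ℝ)
    (hχ : ∀ (n : ℕ) (j : Fin 4), MemLp (chiFun Hh θ m n j) 2 volume)
    (hχt : ∀ (n : ℕ) (j : Fin 4), MemLp (chiFun Hh (-θ) m n j) 2 volume) (n : ℕ) :
    Pminus Hh θ m hχ hχt n =
      ((signFlip.compLp : HS ≃ₗᵢ[ℂ] HS) : HS →L[ℂ] HS) ∘L Pplus Hh θ m hχ hχt n ∘L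
        ((signFlip.compLp : HS ≃ₗᵢ[ℂ] HS).symm : HS →L[ℂ] HS) := by
  have h₂ := chiFun_eq_signFlip Hh θ (uVec_eq_signFlip (vRaw_two_eq_signFlip m n))
  have h₃ := chiFun_eq_signFlip Hh θ (uVec_eq_signFlip (vRaw_three_eq_signFlip m n))
  have h₂' := chiFun_eq_signFlip Hh (-θ) (uVec_eq_signFlip (vRaw_two_eq_signFlip m n))
  have h₃' := chiFun_eq_signFlip Hh (-θ) (uVec_eq_signFlip (vRaw_three_eq_signFlip m n))
  rw [Pminus, Pplus, ContinuousLinearMap.add_comp, ContinuousLinearMap.comp_add,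
    LinearIsometryEquiv.comp_smulRight_innerSL_comp_symm,
    LinearIsometryEquiv.comp_smulRight_innerSL_comp_symm,
    signFlip.compLp_toLp _ (hχ n 2) h₂, signFlip.compLp_toLp _ (hχ n 3) h₃,
    signFlip.compLp_toLp _ (hχt n 2) h₂', signFlip.compLp_toLp _ (hχt n 3) h₃', add_comm]

theorem Pplus_norm_eq_Pminus_norm_general (θ m : ℝ)
    (Hh : ℕ → ℂ → ℂ)
    (hχ : ∀ (n : ℕ) (j : Fin 4), MemLp (chiFun Hh θ m n j) 2 volume)
    (hχt : ∀ (n : ℕ) (j : Fin 4), MemLp (chiFun Hh (-θ) m n j) 2 volume)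
    (n : ℕ) :
    ‖Pplus Hh θ m hχ hχt n‖ = ‖Pminus Hh θ m hχ hχt n‖ := by
  rw [Pminus_eq_conj_Pplus, ContinuousLinearMap.opNorm_linearIsometryEquiv_comp,
    ContinuousLinearMap.opNorm_comp_linearIsometryEquiv]

/-- for every `n ≥ 1` the operator norms of the two spectral projectors
coincide: `‖P_n^+‖ = ‖P_n^-‖`. The hypotheses state that `Hh n` is the entire extension of
the `n`-th `L²`-normalized Hermite function and record membership of the eigenfunctions
in `L²`. -/
theorem Pplus_norm_eq_Pminus_norm (θ m : ℝ)
    (hθ : θ ∈ Set.Ioo (-(Real.pi / 2)) (Real.pi / 2)) (hm : 0 ≤ m)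
    (Hh : ℕ → ℂ → ℂ) (hent : ∀ n, Differentiable ℂ (Hh n))
    (hODE : ∀ (n : ℕ) (t : ℂ),
      -(deriv (deriv (Hh n)) t) + t ^ 2 * Hh n t = (2 * (n : ℂ) + 1) * Hh n t)
    (e : ℕ → Lp ℂ 2 (volume : Measure ℝ))
    (he : ∀ n, (e n : ℝ → ℂ) =ᵐ[volume] fun x : ℝ => Hh n (x : ℂ))
    (horth : Orthonormal ℂ e)
    (hcomp : (Submodule.span ℂ (Set.range e)).topologicalClosure = ⊤)
    (hχ : ∀ (n : ℕ) (j : Fin 4), MemLp (chiFun Hh θ m n j) 2 volume)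
    (hχt : ∀ (n : ℕ) (j : Fin 4), MemLp (chiFun Hh (-θ) m n j) 2 volume)
    (n : ℕ) (hn : 1 ≤ n) :
    ‖Pplus Hh θ m hχ hχt n‖ = ‖Pminus Hh θ m hχ hχt n‖ :=
  Pplus_norm_eq_Pminus_norm_general θ m Hh hχ hχt n
end
end
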